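/- Let Π ∈ ℝ^{n×n} be a symmetric matrix satisfying Π² = Π + F for a symmetric matrix F, let C ⊆ {1,…,n} be an index set with |C| = r ≥ 2, and suppose Π(C,C) = R̃ᵀR̃ + E, where E is a symmetric r×r matrix and R̃ is an r×r upper triangular matrix whose diagonal entries all satisfy r̃_{ii} ≥ δ for some δ > 0 with δ ≤ 1. Set ε_H = ‖E‖₂ + ‖F‖₂ and let D be the diagonal matrix with entries D_{ii} = r̃_{ii}. Then ‖Π(C,C) − D²‖₂ ≤ (r−1)(1−δ²) + r·ε_H. -/

import Mathlib

/-!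
Write `B = Π(C,C)` and `s = xᵀx`. Extending `x` by zeros to `x̃`, Cauchy–Schwarz applied to
`‖Πx̃‖² = x̃ᵀΠx̃ + x̃ᵀFx̃` gives `xᵀBx ≤ (1 + ‖F‖) s`; as `r̃ᵢᵢ ≥ δ`, this yields
`xᵀ(B - D²)x ≤ (1 - δ² + ‖F‖) s`. From `Bᵢᵢ = ∑ₖ r̃ₖᵢ² + Eᵢᵢ` we get `r̃ᵢᵢ² ≤ Bᵢᵢ + ‖E‖`, so
`B - D² ≥ -T - ‖E‖` for `T = diag(B) - B`. This `T` has trace zero and `T ≥ -(1 - δ² + ε_H)`;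
since its eigenvalues sum to zero, each is at most `(r - 1)(1 - δ² + ε_H)`, which bounds
`B - D²` from below.
-/

open Matrix

/-- The spectral norm (largest singular value) of a real matrix: the operator
norm induced by the Euclidean vector norms. -/
noncomputable def specNorm {m n : ℕ} (M : Matrix (Fin m) (Fin n) ℝ) : ℝ :=
  ‖LinearMap.toContinuousLinearMap (Matrix.toEuclideanLin M)‖

lemma EuclideanSpace.real_dotProduct_ofLp_self {ι : Type*} [Fintype ι]
    (x : EuclideanSpace ℝ ι) : x.ofLp ⬝ᵥ x.ofLp = ‖x‖ ^ 2 := by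
  rw [EuclideanSpace.real_norm_sq_eq]
  simp [dotProduct, sq]

section SpecNorm

variable {k : ℕ}

lemma specNorm_nonneg (M : Matrix (Fin k) (Fin k) ℝ) : 0 ≤ specNorm M := norm_nonneg _

lemma inner_toEuclideanLin_toLp (M : Matrix (Fin k) (Fin k) ℝ) (x : Fin k → ℝ) :
    inner ℝ (toEuclideanLin M (WithLp.toLp 2 x)) (WithLp.toLp 2 x) = x ⬝ᵥ M *ᵥ x := by
  simp [EuclideanSpace.inner_eq_star_dotProduct]

lemma abs_dotProduct_mulVec_self_le_specNorm (M : Matrix (Fin k) (Fin k) ℝ) (x : Fin k → ℝ) :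
    |x ⬝ᵥ M *ᵥ x| ≤ specNorm M * (x ⬝ᵥ x) := by
  set T := LinearMap.toContinuousLinearMap (toEuclideanLin M)
  set X := WithLp.toLp 2 x
  have hX : x ⬝ᵥ x = ‖X‖ ^ 2 := EuclideanSpace.real_dotProduct_ofLp_self X
  rw [← inner_toEuclideanLin_toLp, hX]
  calc |inner ℝ (T X) X| ≤ ‖T X‖ * ‖X‖ := abs_real_inner_le_norm _ _
    _ ≤ ‖T‖ * ‖X‖ * ‖X‖ := by gcongr; exact T.le_opNorm _
    _ = specNorm M * ‖X‖ ^ 2 := by rw [specNorm]; ring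

lemma abs_apply_self_le_specNorm (M : Matrix (Fin k) (Fin k) ℝ) (i : Fin k) :
    |M i i| ≤ specNorm M := by
  simpa using abs_dotProduct_mulVec_self_le_specNorm M (Pi.single i 1)

lemma specNorm_le_of_abs_dotProduct_mulVec_self_le {S : Matrix (Fin k) (Fin k) ℝ}
    (hS : S.IsHermitian) {c : ℝ} (hc : 0 ≤ c) (h : ∀ x, |x ⬝ᵥ S *ᵥ x| ≤ c * (x ⬝ᵥ x)) :
    specNorm S ≤ c := by
  rw [specNorm, ContinuousLinearMap.norm_eq_iSup_rayleighQuotient _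
    (isSymmetric_toEuclideanLin_iff.mpr hS)]
  refine ciSup_le fun X => ?_
  rcases eq_or_ne X 0 with rfl | hX
  · simpa using hc
  have hX2 : 0 < ‖X‖ ^ 2 := by positivity
  rw [ContinuousLinearMap.rayleighQuotient, ContinuousLinearMap.reApplyInnerSelf_apply, abs_div,
    abs_of_pos hX2, div_le_iff₀ hX2, ← EuclideanSpace.real_dotProduct_ofLp_self]
  simpa [← inner_toEuclideanLin_toLp] using h X.ofLp

end SpecNorm

lemma sq_dotProduct_le_mul_dotProduct_self {ι : Type*} [Fintype ι] (x y : ι → ℝ) :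
    (x ⬝ᵥ y) ^ 2 ≤ (x ⬝ᵥ x) * (y ⬝ᵥ y) := by
  simpa [dotProduct, sq] using Finset.sum_mul_sq_le_sq_mul_sq Finset.univ x y

lemma le_one_add_mul_of_sq_le {q s f : ℝ} (hs : 0 ≤ s) (hf : 0 ≤ f)
    (h : q ^ 2 ≤ s * (q + f * s)) : q ≤ (1 + f) * s := by
  by_contra! hq
  have hq0 : 0 < q := lt_of_le_of_lt (by positivity) hq
  have hsq : s ≤ q := by nlinarith
  nlinarith [mul_lt_mul_of_pos_left hq hq0, mul_le_mul_of_nonneg_left hsq (mul_nonneg hf hs)]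

lemma dotProduct_mulVec_self_le_of_mul_self_eq_add {ι : Type*} [Fintype ι]
    {P F : Matrix ι ι ℝ} (hP : P.IsHermitian) (hPF : P * P = P + F) {f : ℝ} (hf : 0 ≤ f)
    (hF : ∀ y, y ⬝ᵥ F *ᵥ y ≤ f * (y ⬝ᵥ y)) (y : ι → ℝ) :
    y ⬝ᵥ P *ᵥ y ≤ (1 + f) * (y ⬝ᵥ y) := by
  have hy : 0 ≤ y ⬝ᵥ y := by simpa using dotProduct_star_self_nonneg y
  have hPy : P *ᵥ y ⬝ᵥ P *ᵥ y = y ⬝ᵥ P *ᵥ y + y ⬝ᵥ F *ᵥ y := by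
    rw [dotProduct_mulVec, ← mulVec_transpose, ← conjTranspose_eq_transpose_of_trivial, hP.eq,
      mulVec_mulVec, dotProduct_comm, hPF, add_mulVec, dotProduct_add]
  refine le_one_add_mul_of_sq_le hy hf ?_
  calc (y ⬝ᵥ P *ᵥ y) ^ 2 ≤ (y ⬝ᵥ y) * (P *ᵥ y ⬝ᵥ P *ᵥ y) :=
        sq_dotProduct_le_mul_dotProduct_self _ _
    _ ≤ (y ⬝ᵥ y) * (y ⬝ᵥ P *ᵥ y + f * (y ⬝ᵥ y)) := by
      rw [hPy]
      gcongr
      exact hF y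

section ExtendByZero

variable {κ ι R : Type*} [Fintype κ] [Fintype ι] [CommSemiring R] {c : κ → ι}

lemma extend_zero_dotProduct (hc : c.Injective) (x : κ → R) (v : ι → R) :
    Function.extend c x 0 ⬝ᵥ v = x ⬝ᵥ (v ∘ c) :=
  (Fintype.sum_of_injective c hc _ _
    (fun i hi => by simp [Function.extend_apply' _ _ _ hi])
    (fun j => by simp [hc.extend_apply])).symm

lemma extend_zero_dotProduct_self (hc : c.Injective) (x : κ → R) :
    Function.extend c x 0 ⬝ᵥ Function.extend c x 0 = x ⬝ᵥ x := by
  rw [extend_zero_dotProduct hc, Function.extend_comp hc]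

lemma dotProduct_submatrix_mulVec_self (hc : c.Injective) (M : Matrix ι ι R) (x : κ → R) :
    x ⬝ᵥ M.submatrix c c *ᵥ x = Function.extend c x 0 ⬝ᵥ M *ᵥ Function.extend c x 0 := by
  rw [extend_zero_dotProduct hc]
  congr 1
  funext j
  simp only [Function.comp_apply, mulVec, dotProduct_comm (M (c j)), extend_zero_dotProduct hc]
  exact dotProduct_comm _ _

end ExtendByZero

section Diagonal

variable {ι : Type*} [Fintype ι] [DecidableEq ι]

lemma dotProduct_diagonal_mulVec_self (d x : ι → ℝ) :
    x ⬝ᵥ diagonal d *ᵥ x = ∑ i, d i * (x i * x i) := by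
  simp only [dotProduct, mulVec_diagonal]
  exact Finset.sum_congr rfl fun i _ => by ring

lemma mul_dotProduct_self_le_dotProduct_diagonal_mulVec_self {d : ι → ℝ} {a : ℝ}
    (h : ∀ i, a ≤ d i) (x : ι → ℝ) : a * (x ⬝ᵥ x) ≤ x ⬝ᵥ diagonal d *ᵥ x := by
  rw [dotProduct_diagonal_mulVec_self, dotProduct, Finset.mul_sum]
  exact Finset.sum_le_sum fun i _ => mul_le_mul_of_nonneg_right (h i) (mul_self_nonneg _)

lemma dotProduct_diagonal_mulVec_self_le_add {d d' : ι → ℝ} {a : ℝ}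
    (h : ∀ i, d i ≤ d' i + a) (x : ι → ℝ) :
    x ⬝ᵥ diagonal d *ᵥ x ≤ x ⬝ᵥ diagonal d' *ᵥ x + a * (x ⬝ᵥ x) := by
  rw [dotProduct_diagonal_mulVec_self, dotProduct_diagonal_mulVec_self, dotProduct,
    Finset.mul_sum, ← Finset.sum_add_distrib]
  exact Finset.sum_le_sum fun i _ => by nlinarith [h i, mul_self_nonneg (x i)]

end Diagonal

namespace Matrix.IsHermitian

variable {ι : Type*} [Fintype ι] [DecidableEq ι] {T : Matrix ι ι ℝ}

lemma le_eigenvalues_of_le_dotProduct_mulVec (hT : T.IsHermitian) {a : ℝ}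
    (h : ∀ x, a * (x ⬝ᵥ x) ≤ x ⬝ᵥ T *ᵥ x) (i : ι) : a ≤ hT.eigenvalues i := by
  have hv := h (hT.eigenvectorBasis i)
  rw [EuclideanSpace.real_dotProduct_ofLp_self, hT.eigenvectorBasis.orthonormal.1 i] at hv
  rw [hT.eigenvalues_eq i]
  simpa using hv

lemma dotProduct_mulVec_le_of_eigenvalues_le (hT : T.IsHermitian) {b : ℝ}
    (h : ∀ i, hT.eigenvalues i ≤ b) (x : ι → ℝ) : x ⬝ᵥ T *ᵥ x ≤ b * (x ⬝ᵥ x) := by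
  have hpsd : (algebraMap ℝ _ b - T).PosSemidef := by
    rw [posSemidef_iff_isHermitian_and_spectrum_nonneg, ← spectrum.singleton_sub_eq,
      hT.spectrum_real_eq_range_eigenvalues]
    refine ⟨(IsSelfAdjoint.algebraMap _ (.all b)).sub hT, ?_⟩
    rintro _ ⟨_, rfl, _, ⟨i, rfl⟩, rfl⟩
    simpa using h i
  have := hpsd.dotProduct_mulVec_nonneg x
  rw [star_trivial, Algebra.algebraMap_eq_smul_one, sub_mulVec, smul_mulVec, one_mulVec,
    dotProduct_sub, dotProduct_smul, smul_eq_mul] at this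
  linarith

lemma dotProduct_mulVec_self_le_of_trace_eq_zero (hT : T.IsHermitian) (htr : T.trace = 0)
    {c : ℝ} (h : ∀ x, -c * (x ⬝ᵥ x) ≤ x ⬝ᵥ T *ᵥ x) (x : ι → ℝ) :
    x ⬝ᵥ T *ᵥ x ≤ ((Fintype.card ι : ℝ) - 1) * c * (x ⬝ᵥ x) := by
  refine hT.dotProduct_mulVec_le_of_eigenvalues_le (fun i => ?_) x
  have hlow := hT.le_eigenvalues_of_le_dotProduct_mulVec h
  have hsum : ∑ j, (hT.eigenvalues j + c) = Fintype.card ι * c := by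
    have := hT.trace_eq_sum_eigenvalues
    simp only [htr, RCLike.ofReal_real_eq_id, id] at this
    simp [Finset.sum_add_distrib, ← this]
  have := Finset.single_le_sum (fun j _ => by linarith [hlow j] : ∀ j ∈ Finset.univ,
    0 ≤ hT.eigenvalues j + c) (Finset.mem_univ i)
  linarith

end Matrix.IsHermitian

section DiagonalPerturbation

variable {ι : Type*} [Fintype ι] [DecidableEq ι] {B : Matrix ι ι ℝ} {d : ι → ℝ} {a f : ℝ}

lemma dotProduct_sub_diagonal_mulVec_self_le (hB : ∀ x, x ⬝ᵥ B *ᵥ x ≤ (1 + f) * (x ⬝ᵥ x))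
    (hd : ∀ i, a ≤ d i) (x : ι → ℝ) :
    x ⬝ᵥ (B - diagonal d) *ᵥ x ≤ (1 - a + f) * (x ⬝ᵥ x) := by
  rw [sub_mulVec, dotProduct_sub]
  linarith [hB x, mul_dotProduct_self_le_dotProduct_diagonal_mulVec_self hd x]

lemma neg_le_dotProduct_sub_diagonal_mulVec_self (hB : B.IsHermitian)
    (hBq : ∀ x, x ⬝ᵥ B *ᵥ x ≤ (1 + f) * (x ⬝ᵥ x)) (hd : ∀ i, a ≤ d i) {e : ℝ}
    (hdB : ∀ i, d i ≤ B i i + e) (x : ι → ℝ) :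
    -((((Fintype.card ι : ℝ) - 1) * (1 - a + e + f) + e) * (x ⬝ᵥ x)) ≤
      x ⬝ᵥ (B - diagonal d) *ᵥ x := by
  set T := diagonal B.diag - B
  have hT : T.IsHermitian := (isHermitian_diagonal _).sub hB
  have htr : T.trace = 0 := by simp [T, trace]
  have hTq (y : ι → ℝ) : y ⬝ᵥ T *ᵥ y = y ⬝ᵥ diagonal B.diag *ᵥ y - y ⬝ᵥ B *ᵥ y := by
    rw [sub_mulVec, dotProduct_sub]
  have hTlow (y : ι → ℝ) : -(1 - a + e + f) * (y ⬝ᵥ y) ≤ y ⬝ᵥ T *ᵥ y := by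
    have := mul_dotProduct_self_le_dotProduct_diagonal_mulVec_self
      (fun i => by rw [diag_apply]; linarith [hd i, hdB i] : ∀ i, a - e ≤ B.diag i) y
    linarith [hTq y, hBq y]
  have hTx := hT.dotProduct_mulVec_self_le_of_trace_eq_zero htr hTlow x
  have hdx := dotProduct_diagonal_mulVec_self_le_add (d' := B.diag) hdB x
  rw [sub_mulVec, dotProduct_sub]
  linarith [hTq x]

end DiagonalPerturbation

lemma sq_apply_self_le_transpose_mul_self_apply_self {ι : Type*} [Fintype ι]
    (A : Matrix ι ι ℝ) (i : ι) : A i i ^ 2 ≤ (Aᵀ * A) i i := by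
  rw [mul_apply]
  simpa [sq] using Finset.single_le_sum (f := fun k => A k i * A k i)
    (fun k _ => mul_self_nonneg _) (Finset.mem_univ i)

lemma sq_apply_self_le_apply_self_add_specNorm {k : ℕ} {B A E : Matrix (Fin k) (Fin k) ℝ}
    (hB : B = Aᵀ * A + E) (i : Fin k) : A i i ^ 2 ≤ B i i + specNorm E := by
  rw [hB, Matrix.add_apply]
  linarith [sq_apply_self_le_transpose_mul_self_apply_self A i,
    (abs_le.mp (abs_apply_self_le_specNorm E i)).1]

theorem stmt8_general {n r : ℕ} (hr : 2 ≤ r)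
    (Pj F : Matrix (Fin n) (Fin n) ℝ) (hPj : Pj.IsHermitian)
    (hPF : Pj * Pj = Pj + F)
    (c : Fin r → Fin n) (hc : Function.Injective c)
    (E Rt : Matrix (Fin r) (Fin r) ℝ)
    (δ : ℝ) (hδ : 0 < δ) (hδ1 : δ ≤ 1) (hdiag : ∀ i, δ ≤ Rt i i)
    (hfact : Pj.submatrix c c = Rtᵀ * Rt + E)
    (εH : ℝ) (hεH : εH = specNorm E + specNorm F)
    (D : Matrix (Fin r) (Fin r) ℝ) (hD : D = Matrix.diagonal fun i => Rt i i) :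
    specNorm (Pj.submatrix c c - D * D) ≤
      ((r : ℝ) - 1) * (1 - δ ^ 2) + (r : ℝ) * εH := by
  have hBq (x : Fin r → ℝ) : x ⬝ᵥ Pj.submatrix c c *ᵥ x ≤ (1 + specNorm F) * (x ⬝ᵥ x) := by
    rw [dotProduct_submatrix_mulVec_self hc, ← extend_zero_dotProduct_self hc x]
    exact dotProduct_mulVec_self_le_of_mul_self_eq_add hPj hPF (specNorm_nonneg F)
      (fun y => (le_abs_self _).trans (abs_dotProduct_mulVec_self_le_specNorm F y)) _
  have hd (i : Fin r) : δ ^ 2 ≤ Rt i i ^ 2 := pow_le_pow_left₀ hδ.le (hdiag i) 2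
  have hx (x : Fin r → ℝ) : 0 ≤ x ⬝ᵥ x := by simpa using dotProduct_star_self_nonneg x
  have hr' : (2 : ℝ) ≤ r := by exact_mod_cast hr
  have hδ2 : δ ^ 2 ≤ 1 := pow_le_one₀ hδ.le hδ1
  have he := specNorm_nonneg E
  have hf := specNorm_nonneg F
  have hDD : D * D = diagonal fun i => Rt i i ^ 2 := by simp [hD, sq]
  rw [hDD, hεH]
  refine specNorm_le_of_abs_dotProduct_mulVec_self_le
    ((hPj.submatrix c).sub (isHermitian_diagonal _)) (by nlinarith) fun x => abs_le.mpr ⟨?_, ?_⟩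
  · have hlow := neg_le_dotProduct_sub_diagonal_mulVec_self (hPj.submatrix c) hBq hd
      (sq_apply_self_le_apply_self_add_specNorm hfact) x
    rw [Fintype.card_fin] at hlow
    refine le_trans (neg_le_neg (mul_le_mul_of_nonneg_right ?_ (hx x))) hlow
    nlinarith
  · refine (dotProduct_sub_diagonal_mulVec_self_le hBq hd x).trans
      (mul_le_mul_of_nonneg_right ?_ (hx x))
    nlinarith

theorem stmt8 {n r : ℕ} (hr : 2 ≤ r)
    (Pj F : Matrix (Fin n) (Fin n) ℝ) (hPj : Pj.IsHermitian) (hF : F.IsHermitian)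
    (hPF : Pj * Pj = Pj + F)
    (c : Fin r → Fin n) (hc : Function.Injective c)
    (E Rt : Matrix (Fin r) (Fin r) ℝ) (hE : E.IsHermitian)
    (hRt : Rt.BlockTriangular id)
    (δ : ℝ) (hδ : 0 < δ) (hδ1 : δ ≤ 1) (hdiag : ∀ i, δ ≤ Rt i i)
    (hfact : Pj.submatrix c c = Rtᵀ * Rt + E)
    (εH : ℝ) (hεH : εH = specNorm E + specNorm F)
    (D : Matrix (Fin r) (Fin r) ℝ) (hD : D = Matrix.diagonal fun i => Rt i i) :
    specNorm (Pj.submatrix c c - D * D) ≤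
      ((r : ℝ) - 1) * (1 - δ ^ 2) + (r : ℝ) * εH :=
  stmt8_general hr Pj F hPj hPF c hc E Rt δ hδ hδ1 hdiag hfact εH hεH D hD
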